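/- arXiv:2209.10490 — 3 statements merged into one kernel-verified Lean document; each statement's English description precedes it below -/
import Mathlib

section
/- Almost-everywhere lower semicontinuity of the stopped Lipschitz functional (Lemma 'lip const lowe semi'): Let L : Ω → C(ℝ₊;ℝ₊) be continuous, and for M > 0 set ρ_M(ω) := inf{t ≥ 0 : L(ω)(t) ≥ M} ∈ [0,∞] (with inf ∅ = ∞). For (ω,α) ∈ Ω × C(ℝ₊;ℝ) define ζ_M(ω,α) := sup{ |α(t ∧ ρ_M(ω)) − α(s ∧ ρ_M(ω))| / (t − s) : 0 ≤ s < t } ∈ [0,∞]. Then, for every Borel probability measure P on Ω × C(ℝ₊;ℝ), there exists a dense set D ⊆ ℝ₊ such that for every M ∈ D there is a P-null set N = N(M) with the property that ζ_M is lower semicontinuous at every point of (Ω × C(ℝ₊;ℝ)) \ N. -/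
open MeasureTheory Set Filter Topology
open scoped NNReal ENNReal

noncomputable section

namespace NLSP

variable {F : Type*} [TopologicalSpace F]

/-- Hitting time `ρ_M(ω) = inf {t ≥ 0 : L(ω)(t) ≥ M} ∈ [0, ∞]` (with `inf ∅ = ∞`). -/
def hitTimeNN (L : C(ℝ≥0, F) → C(ℝ≥0, ℝ≥0)) (M : ℝ≥0) (ω : C(ℝ≥0, F)) : ℝ≥0∞ :=
  ⨅ t ∈ {t : ℝ≥0 | M ≤ L ω t}, (t : ℝ≥0∞)

/-- Evaluation of the path `α` stopped at the (possibly infinite) time `ρ`: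
`α (t ∧ ρ)`. -/
def stopVal (ρ : ℝ≥0∞) (α : C(ℝ≥0, ℝ)) (t : ℝ≥0) : ℝ :=
  α (min (t : ℝ≥0∞) ρ).toNNReal

/-- The stopped Lipschitz functional
`ζ_M(ω, α) = sup {|α(t ∧ ρ_M(ω)) − α(s ∧ ρ_M(ω))| / (t − s) : 0 ≤ s < t} ∈ [0, ∞]`. -/
def zeta (L : C(ℝ≥0, F) → C(ℝ≥0, ℝ≥0)) (M : ℝ≥0)
    (p : C(ℝ≥0, F) × C(ℝ≥0, ℝ)) : ℝ≥0∞ :=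
  ⨆ (s : ℝ≥0) (t : ℝ≥0) (_ : s < t),
    ENNReal.ofReal
      (|stopVal (hitTimeNN L M p.1) p.2 t - stopVal (hitTimeNN L M p.1) p.2 s|
        / ((t : ℝ) - (s : ℝ)))

/-!
The hitting time `ρ_M` is lower semicontinuous in `ω` (the constraint `L ω < M` on a compact
time interval is open in the compact-open topology), and it is also upper semicontinuous at
every `ω` where `ρ_M(ω)` equals its right limit `ρ_{M+}(ω) = ⨅ M' > M, ρ_{M'}(ω)`: a time
`t` with `L ω t ≥ M' > M` survives small perturbations of `ω`. Where `ρ_M` is continuous,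
`ζ_M` is a supremum of functions continuous at that point, hence lower semicontinuous.
Finally `M ↦ ∫ (ρ_M + 1)⁻¹ dP` is antitone, so it is continuous off a countable set, and at
each of its continuity points monotone convergence forces `ρ_M = ρ_{M+}` `P`-almost surely.
-/

end NLSP

theorem Set.Countable.dense_compl_of_baireSpace {X : Type*} [TopologicalSpace X] [T1Space X]
    [BaireSpace X] [∀ x : X, (𝓝[≠] x).NeBot] {s : Set X} (hs : s.Countable) : Dense sᶜ := by
  rw [← biUnion_of_singleton s, compl_iUnion₂]
  exact dense_biInter_of_isOpen (fun _ _ => isOpen_compl_singleton) hs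
    fun x _ => dense_compl_singleton x

section RightContinuity

variable {ι α : Type*} [LinearOrder ι] [TopologicalSpace ι] [OrderTopology ι]
  [DenselyOrdered ι] [NoMaxOrder ι] [FirstCountableTopology ι]
  [MeasurableSpace α] {μ : Measure α}

theorem ae_le_iSup_gt_of_continuousAt_lintegral {g : ι → α → ℝ≥0∞} (hg : Antitone g)
    (hmeas : ∀ i, Measurable (g i)) {i : ι} (hfin : ∫⁻ a, g i a ∂μ ≠ ∞)
    (hcont : ContinuousAt (fun j => ∫⁻ a, g j a ∂μ) i) :
    ∀ᵐ a ∂μ, g i a ≤ ⨆ j > i, g j a := by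
  obtain ⟨u, hu_anti, hu_gt, hu_lim⟩ := exists_seq_strictAnti_tendsto i
  have hsup_le : ∀ a, ⨆ n, g (u n) a ≤ g i a := fun a => iSup_le fun n => hg (hu_gt n).le a
  have hle_int : ∫⁻ a, g i a ∂μ ≤ ∫⁻ a, ⨆ n, g (u n) a ∂μ := by
    rw [lintegral_iSup (fun n => hmeas (u n)) fun m n h => hg (hu_anti.antitone h)]
    exact le_of_tendsto' (hcont.tendsto.comp hu_lim)
      fun n => le_iSup (fun n => ∫⁻ a, g (u n) a ∂μ) n
  have hae := ae_eq_of_ae_le_of_lintegral_le (ae_of_all μ hsup_le)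
    (ne_top_of_le_ne_top hfin (lintegral_mono hsup_le)) (hmeas i).aemeasurable hle_int
  filter_upwards [hae] with a ha
  rw [← ha]
  exact iSup_le fun n => le_iSup₂_of_le (u n) (hu_gt n) le_rfl

theorem Monotone.countable_not_ae_iInf_gt_le [SecondCountableTopology ι] [IsFiniteMeasure μ]
    {f : ι → α → ℝ≥0∞} (hf : Monotone f) (hmeas : ∀ i, Measurable (f i)) :
    {i | ¬ ∀ᵐ a ∂μ, ⨅ j > i, f j a ≤ f i a}.Countable := by
  -- `x ↦ (x + 1)⁻¹` makes the family antitone and bounded by `1`, hence of finite integral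
  set g : ι → α → ℝ≥0∞ := fun i a => (f i a + 1)⁻¹
  have hg : Antitone g := fun i j h a => ENNReal.inv_le_inv.2 (add_le_add (hf h a) le_rfl)
  have hfin (i : ι) : ∫⁻ a, g i a ∂μ ≠ ∞ := by
    refine ne_top_of_le_ne_top (measure_ne_top μ univ) ?_
    simpa using lintegral_mono fun a => ENNReal.inv_le_one.2 (le_add_self : 1 ≤ f i a + 1)
  have hint : Antitone fun i => ∫⁻ a, g i a ∂μ := fun i j h => lintegral_mono (hg h)
  refine hint.countable_not_continuousAt.mono fun i => not_imp_not.2 fun hcont => ?_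
  filter_upwards [ae_le_iSup_gt_of_continuousAt_lintegral hg
    (fun i => ((hmeas i).add_const 1).inv) (hfin i) hcont] with a ha
  have hinv : ⨆ j > i, g j a = ((⨅ j > i, f j a) + 1)⁻¹ := by
    simp only [g, ENNReal.iInf_add, ENNReal.inv_iInf]
  rwa [hinv, ENNReal.inv_le_inv, ENNReal.add_le_add_iff_right ENNReal.one_ne_top] at ha

end RightContinuity

namespace NLSP

variable {F : Type*} [TopologicalSpace F] {L : C(ℝ≥0, F) → C(ℝ≥0, ℝ≥0)} {M : ℝ≥0}
  {ω : C(ℝ≥0, F)}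

theorem hitTimeNN_le {t : ℝ≥0} (h : M ≤ L ω t) : hitTimeNN L M ω ≤ t :=
  iInf₂_le t h

theorem apply_lt_of_lt_hitTimeNN {t : ℝ≥0} (h : (t : ℝ≥0∞) < hitTimeNN L M ω) : L ω t < M :=
  lt_of_not_ge fun hM => (hitTimeNN_le hM).not_gt h

theorem le_hitTimeNN_of_mapsTo {c : ℝ≥0} (h : MapsTo (L ω) (Icc 0 c) (Iio M)) :
    (c : ℝ≥0∞) ≤ hitTimeNN L M ω := by
  refine le_iInf₂ fun t (ht : M ≤ L ω t) => ENNReal.coe_le_coe.2 (le_of_not_gt fun htc => ?_)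
  exact (h ⟨zero_le, htc.le⟩).not_ge ht

theorem monotone_hitTimeNN : Monotone fun M => hitTimeNN L M ω :=
  fun _ _ h => biInf_mono fun _ ht => h.trans ht

theorem lowerSemicontinuous_hitTimeNN (hL : Continuous L) (M : ℝ≥0) :
    LowerSemicontinuous (hitTimeNN L M) := by
  intro ω y hy
  obtain ⟨c, hyc, hc⟩ := ENNReal.lt_iff_exists_nnreal_btwn.1 hy
  have hmaps : MapsTo (L ω) (Icc 0 c) (Iio M) := fun t ht =>
    apply_lt_of_lt_hitTimeNN ((ENNReal.coe_le_coe.2 ht.2).trans_lt hc)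
  filter_upwards [hL.continuousAt.eventually
    (ContinuousMap.eventually_mapsTo isCompact_Icc isOpen_Iio hmaps)] with ω' h
  exact hyc.trans_le (le_hitTimeNN_of_mapsTo h)

theorem continuousAt_hitTimeNN (hL : Continuous L)
    (h : ⨅ M' > M, hitTimeNN L M' ω ≤ hitTimeNN L M ω) : ContinuousAt (hitTimeNN L M) ω := by
  refine continuousAt_iff_lower_upperSemicontinuousAt.2
    ⟨lowerSemicontinuous_hitTimeNN hL M ω, fun c hc => ?_⟩
  obtain ⟨M', hMM', t, hM't, htc⟩ : ∃ M' > M, ∃ t : ℝ≥0, M' ≤ L ω t ∧ (t : ℝ≥0∞) < c := by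
    simpa [hitTimeNN, iInf_lt_iff] using h.trans_lt hc
  filter_upwards [((continuous_eval_const t).comp hL).continuousAt.eventually_const_lt
    (hMM'.trans_le hM't)] with ω' hω'
  exact (hitTimeNN_le hω'.le).trans_lt htc

theorem continuous_stopVal (t : ℝ≥0) :
    Continuous fun q : ℝ≥0∞ × C(ℝ≥0, ℝ) => stopVal q.1 q.2 t := by
  have hstop : Continuous fun ρ : ℝ≥0∞ => (min (t : ℝ≥0∞) ρ).toNNReal :=
    continuous_iff_continuousAt.2 fun ρ =>
      (ENNReal.tendsto_toNNReal ((min_le_left _ _).trans_lt ENNReal.coe_lt_top).ne).comp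
        (continuous_const.min continuous_id).continuousAt
  exact continuous_eval.comp (continuous_snd.prodMk (hstop.comp continuous_fst))

theorem lowerSemicontinuousAt_zeta {p : C(ℝ≥0, F) × C(ℝ≥0, ℝ)}
    (hρ : ContinuousAt (hitTimeNN L M) p.1) : LowerSemicontinuousAt (zeta L M) p := by
  have hpair : ContinuousAt (fun q : C(ℝ≥0, F) × C(ℝ≥0, ℝ) => (hitTimeNN L M q.1, q.2)) p :=
    (hρ.comp_of_eq continuousAt_fst rfl).prodMk continuousAt_snd
  have hval (t : ℝ≥0) :
      ContinuousAt (fun q : C(ℝ≥0, F) × C(ℝ≥0, ℝ) => stopVal (hitTimeNN L M q.1) q.2 t) p :=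
    (continuous_stopVal t).continuousAt.comp hpair
  refine lowerSemicontinuousAt_iSup fun s => lowerSemicontinuousAt_iSup fun t =>
    lowerSemicontinuousAt_iSup fun _ => ContinuousAt.lowerSemicontinuousAt ?_
  exact ENNReal.continuous_ofReal.continuousAt.comp (((hval t).sub (hval s)).abs.div_const _)

theorem zeta_ae_lowerSemicontinuous_general
    [MeasurableSpace C(ℝ≥0, F)] [BorelSpace C(ℝ≥0, F)]
    [MeasurableSpace C(ℝ≥0, ℝ)]
    (L : C(ℝ≥0, F) → C(ℝ≥0, ℝ≥0)) (hL : Continuous L)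
    (P : Measure (C(ℝ≥0, F) × C(ℝ≥0, ℝ))) [IsProbabilityMeasure P] :
    ∃ D : Set ℝ≥0, Dense D ∧
      ∀ M ∈ D, ∃ N : Set (C(ℝ≥0, F) × C(ℝ≥0, ℝ)), MeasurableSet N ∧ P N = 0 ∧
        ∀ p ∉ N, LowerSemicontinuousAt (zeta L M) p := by
  have hmeas (M : ℝ≥0) : Measurable fun p : C(ℝ≥0, F) × C(ℝ≥0, ℝ) => hitTimeNN L M p.1 :=
    (lowerSemicontinuous_hitTimeNN hL M).measurable.comp measurable_fst
  have hbad := Monotone.countable_not_ae_iInf_gt_le (μ := P)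
    (fun _ _ h p => monotone_hitTimeNN (L := L) (ω := p.1) h) hmeas
  refine ⟨_, hbad.dense_compl_of_baireSpace, fun M hM => ?_⟩
  obtain ⟨N, hsub, hN, hN0⟩ := exists_measurable_superset_of_null (ae_iff.1 (not_not.1 hM))
  refine ⟨N, hN, hN0, fun p hp => lowerSemicontinuousAt_zeta (continuousAt_hitTimeNN hL ?_)⟩
  by_contra h
  exact hp (hsub h)

/-- **Almost-everywhere lower semicontinuity of the stopped Lipschitz functional**: if
`L : Ω → C(ℝ≥0, ℝ≥0)` is continuous then, for every Borel probability measure `P` on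
`Ω × C(ℝ≥0, ℝ)`, there is a dense set `D ⊆ ℝ≥0` such that for every `M ∈ D` there is a
`P`-null set `N(M)` such that `ζ_M` is lower semicontinuous at every point outside `N(M)`. -/
theorem zeta_ae_lowerSemicontinuous
    [PolishSpace F]
    [MeasurableSpace C(ℝ≥0, F)] [BorelSpace C(ℝ≥0, F)]
    [MeasurableSpace C(ℝ≥0, ℝ)] [BorelSpace C(ℝ≥0, ℝ)]
    (L : C(ℝ≥0, F) → C(ℝ≥0, ℝ≥0)) (hL : Continuous L)
    (P : Measure (C(ℝ≥0, F) × C(ℝ≥0, ℝ))) [IsProbabilityMeasure P] :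
    ∃ D : Set ℝ≥0, Dense D ∧
      ∀ M ∈ D, ∃ N : Set (C(ℝ≥0, F) × C(ℝ≥0, ℝ)), MeasurableSet N ∧ P N = 0 ∧
        ∀ p ∉ N, LowerSemicontinuousAt (zeta L M) p :=
  zeta_ae_lowerSemicontinuous_general L hL P

end NLSP
end
end

section
/- Identities for the pasting measure (Lemma 'identity up to tau'): Let P be a Borel probability measure on Ω, let τ be a finite (𝓕_t)-stopping time, and let ω ↦ Q_ω ∈ 𝒫(Ω) be an 𝓕_τ-measurable map such that Q_ω(X_s = ω(s) for all s ≤ τ(ω)) = 1 for P-almost every ω. Set P̄ := P ⊗_τ Q. Then: (a) P̄ = P on 𝓕_τ, i.e., P̄(A) = P(A) for every A ∈ 𝓕_τ; and (b) for P̄-almost every ω, P̄(·|𝓕_τ)(ω) = Q_ω (for any fixed version of the regular conditional probability). -/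
open MeasureTheory Set Filter Topology
open scoped NNReal ENNReal

noncomputable section

namespace NLSP

/-- Lebesgue measure on `ℝ≥0`, obtained from Lebesgue measure on `ℝ`. -/
def leb : Measure ℝ≥0 := (volume : Measure ℝ).comap Subtype.val

section PathSpace

variable {F : Type*} [TopologicalSpace F]

/-- The shift map `θ_t ω = ω (· + t)` on the path space `C(ℝ≥0, F)`. -/
def theta (t : ℝ≥0) (ω : C(ℝ≥0, F)) : C(ℝ≥0, F) :=
  ω.comp ⟨fun s => s + t, by fun_prop⟩

/-- The map `γ_t ω = ω ((· - t)⁺)` on the path space `C(ℝ≥0, F)`. -/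
def gammaShift (t : ℝ≥0) (ω : C(ℝ≥0, F)) : C(ℝ≥0, F) :=
  ω.comp ⟨fun s => s - t, by fun_prop⟩

/-- The canonical σ-algebra `𝓕_t = σ(X_s : s ≤ t)` on the path space. -/
def canonicalSig (F : Type*) [TopologicalSpace F] (t : ℝ≥0) :
    MeasurableSpace C(ℝ≥0, F) :=
  ⨆ s ∈ Set.Iic t, MeasurableSpace.comap (fun ω : C(ℝ≥0, F) => ω s) (borel F)

/-- The right-continuous σ-algebra `𝒢^t_s = ⋂_{r > s} σ(X_{v+t} : v ≤ r)` generated by the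
shifted coordinate process. -/
def shiftSig (F : Type*) [TopologicalSpace F] (t s : ℝ≥0) :
    MeasurableSpace C(ℝ≥0, F) :=
  ⨅ r ∈ Set.Ioi s, ⨆ v ∈ Set.Iic r,
    MeasurableSpace.comap (fun ω : C(ℝ≥0, F) => ω (v + t)) (borel F)

end PathSpace

/-- A function `ℝ≥0 → E` is càdlàg if it is right-continuous and has left limits. -/
def Cadlag {E : Type*} [TopologicalSpace E] (f : ℝ≥0 → E) : Prop :=
  (∀ t, ContinuousWithinAt f (Set.Ici t) t) ∧
    ∀ t : ℝ≥0, 0 < t → ∃ l : E, Tendsto f (nhdsWithin t (Set.Iio t)) (nhds l)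

/-- A function is upper semianalytic if its strict superlevel sets are analytic. -/
def UpperSemianalytic {α : Type*} [TopologicalSpace α] (ψ : α → ℝ) : Prop :=
  ∀ c : ℝ, MeasureTheory.AnalyticSet {x | c < ψ x}

section Mart

variable {Ω' : Type*}

/-- `τ` is a stopping time for the filtration `𝒢`. -/
def IsStoppingTimeOn (𝒢 : ℝ≥0 → MeasurableSpace Ω') (τ : Ω' → ℝ≥0) : Prop :=
  ∀ t, MeasurableSet[𝒢 t] {ω | τ ω ≤ t}

/-- `N` is a `P`-martingale for the filtration `𝒢`. -/
def IsMartingaleOn [MeasurableSpace Ω'] (P : Measure Ω')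
    (𝒢 : ℝ≥0 → MeasurableSpace Ω') {E : Type*} [NormedAddCommGroup E] [NormedSpace ℝ E]
    (N : ℝ≥0 → Ω' → E) : Prop :=
  (∀ s, StronglyMeasurable[𝒢 s] (N s)) ∧ (∀ s, Integrable (N s) P) ∧
    ∀ s t : ℝ≥0, s ≤ t → ∀ A : Set Ω', MeasurableSet[𝒢 s] A →
      ∫ ω in A, N t ω ∂P = ∫ ω in A, N s ω ∂P

/-- `N` is a local `P`-martingale for the filtration `𝒢`: there is a localizing
nondecreasing sequence of `𝒢`-stopping times increasing `P`-a.s. to `∞` such that every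
stopped process is a `P`-martingale. -/
def IsLocalMartingaleOn [MeasurableSpace Ω'] (P : Measure Ω')
    (𝒢 : ℝ≥0 → MeasurableSpace Ω') {E : Type*} [NormedAddCommGroup E] [NormedSpace ℝ E]
    (N : ℝ≥0 → Ω' → E) : Prop :=
  ∃ σ : ℕ → Ω' → ℝ≥0,
    (∀ n, IsStoppingTimeOn 𝒢 (σ n)) ∧ (∀ n ω, σ n ω ≤ σ (n + 1) ω) ∧
      (∀ᵐ ω ∂P, Tendsto (fun n => σ n ω) atTop atTop) ∧
      ∀ n, IsMartingaleOn P 𝒢 fun s ω => N (min s (σ n ω)) ω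

/-- Progressive measurability of `a` with respect to the filtration `𝒢`. -/
def ProgMeasOn (𝒢 : ℝ≥0 → MeasurableSpace Ω') {E : Type*} [MeasurableSpace E]
    (a : ℝ≥0 → Ω' → E) : Prop :=
  ∀ s : ℝ≥0,
    @Measurable (ℝ≥0 × Ω') E ((inferInstance : MeasurableSpace ℝ≥0).prod (𝒢 s)) _
      fun p => a (min p.1 s) p.2

end Mart

section Main

variable {F : Type*} [TopologicalSpace F] {𝕂 : Type*} [RCLike 𝕂]
  [MeasurableSpace 𝕂] {U : Type*}

/-- The set `𝒞(t, ω)` of laws under which every test process `Y^u` is a special semimartingale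
(after time `t`) with absolutely continuous compensator whose densities lie in `Θ`. -/
def CSet [MeasurableSpace C(ℝ≥0, F)] (Y : U → ℝ≥0 → C(ℝ≥0, F) → 𝕂)
    (Θ : ℝ≥0 → C(ℝ≥0, F) → Set (U → 𝕂)) (t : ℝ≥0) (ω : C(ℝ≥0, F)) :
    Set (ProbabilityMeasure C(ℝ≥0, F)) :=
  {P | (P : Measure C(ℝ≥0, F)) {ω' | ∀ s ≤ t, ω' s = ω s} = 1 ∧
    ∃ a : U → ℝ≥0 → C(ℝ≥0, F) → 𝕂,
      (∀ u, ProgMeasOn (shiftSig F t) (a u)) ∧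
      (∀ u, ∀ᵐ ω' ∂(P : Measure C(ℝ≥0, F)), ∀ s : ℝ≥0,
        IntegrableOn (fun r => a u r ω') (Set.Iic s) leb) ∧
      (∀ u, IsLocalMartingaleOn (P : Measure C(ℝ≥0, F)) (shiftSig F t)
        fun s ω' => Y u (s + t) ω' - Y u t ω' - ∫ r in Set.Iic s, a u r ω' ∂leb) ∧
      ∀ᵐ p ∂(leb.prod (P : Measure C(ℝ≥0, F))),
        (fun u => a u p.1 p.2) ∈ Θ (p.1 + t) p.2}

/-- The set `ℛ(x) = 𝒞(0, x)` for the Markovian specification `Θ(t, ω) = Θ₀(ω t)`. -/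
def RSet [MeasurableSpace C(ℝ≥0, F)] (Y : U → ℝ≥0 → C(ℝ≥0, F) → 𝕂)
    (Θ₀ : F → Set (U → 𝕂)) (x : F) : Set (ProbabilityMeasure C(ℝ≥0, F)) :=
  CSet Y (fun s ω' => Θ₀ (ω' s)) 0 (ContinuousMap.const ℝ≥0 x)

/-- The set `𝒦(t, x)` for the Markovian specification `Θ(t, ω) = Θ₀(ω t)`. -/
def KSet [MeasurableSpace C(ℝ≥0, F)] (Y : U → ℝ≥0 → C(ℝ≥0, F) → 𝕂)
    (Θ₀ : F → Set (U → 𝕂)) (t : ℝ≥0) (x : F) : Set (ProbabilityMeasure C(ℝ≥0, F)) :=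
  CSet Y (fun s ω' => Θ₀ (ω' s)) t (ContinuousMap.const ℝ≥0 x)

end Main

end NLSP

namespace NLSP

section Conditioning

variable {F : Type*} [TopologicalSpace F]

open Classical in
/-- Concatenation `ω ⊗_t ω'` of two paths: if `ω'(t) = ω(t)` it follows `ω` until time `t`
and `ω'` afterwards; otherwise it is the stopped path `ω(· ∧ t)` (immaterial convention). -/
def concat (t : ℝ≥0) (ω ω' : C(ℝ≥0, F)) : C(ℝ≥0, F) :=
  if h : ω' t = ω t then
    ⟨fun s => if s ≤ t then ω s else ω' s,
      Continuous.if_le ω.continuous ω'.continuous continuous_id continuous_const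
        fun s hs => by rw [hs, h]⟩
  else ω.comp ⟨fun s => min s t, by fun_prop⟩

/-- The σ-algebra `𝓕_τ` of a stopping time `τ` (for a stopping time, the generating family
below is already a σ-algebra). -/
def ftau [MeasurableSpace C(ℝ≥0, F)] (τ : C(ℝ≥0, F) → ℝ≥0) :
    MeasurableSpace C(ℝ≥0, F) :=
  MeasurableSpace.generateFrom
    {A | MeasurableSet A ∧ ∀ t, MeasurableSet[canonicalSig F t] (A ∩ {ω | τ ω ≤ t})}

/-- `κ` is a regular conditional probability of `P` given `𝓕_τ`. -/
def IsRCP [MeasurableSpace C(ℝ≥0, F)] (P : Measure C(ℝ≥0, F)) (τ : C(ℝ≥0, F) → ℝ≥0)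
    (κ : C(ℝ≥0, F) → Measure C(ℝ≥0, F)) : Prop :=
  (∀ ω, IsProbabilityMeasure (κ ω)) ∧
    (∀ A : Set C(ℝ≥0, F), MeasurableSet A →
      @Measurable _ _ (ftau τ) _ fun ω => κ ω A) ∧
    ∀ A B : Set C(ℝ≥0, F), MeasurableSet A → MeasurableSet[ftau τ] B →
      P (A ∩ B) = ∫⁻ ω in B, κ ω A ∂P

/-- The pasting measure `P ⊗_τ Q`. -/
def pasting [MeasurableSpace C(ℝ≥0, F)] (P : Measure C(ℝ≥0, F)) (τ : C(ℝ≥0, F) → ℝ≥0)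
    (Q : C(ℝ≥0, F) → Measure C(ℝ≥0, F)) : Measure C(ℝ≥0, F) :=
  P.bind fun ω => (Q ω).map fun ω' => concat (τ ω) ω ω'

end Conditioning

end NLSP


/-!
Under `Q_ω` almost every path agrees with `ω` up to time `τ ω`. On such paths the concatenation
is the identity, so `P ⊗_τ Q = P.bind Q`, and every `𝓕_τ`-measurable quantity is `Q_ω`-a.s.
equal to its value at `ω` (Galmarino's test: an `𝓕_τ`-set, and `τ` itself, only see the path up
to `τ`). Integrating against `P`, the pasting agrees with `P` on `𝓕_τ` and
`∫_B Q_· A d(P ⊗_τ Q) = (P ⊗_τ Q)(A ∩ B)` for `B ∈ 𝓕_τ`, i.e. `Q` is a regular conditional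
probability of `P ⊗_τ Q` given `𝓕_τ`; these are unique a.s. since the path space is countably
generated.
-/

namespace MeasureTheory

theorem exists_countable_isPiSystem_generateFrom (α : Type*) [m : MeasurableSpace α]
    [MeasurableSpace.CountablyGenerated α] :
    ∃ C : Set (Set α), C.Countable ∧ IsPiSystem C ∧ m = MeasurableSpace.generateFrom C := by
  let e := MeasurableSpace.natGeneratingSequence α
  refine ⟨range fun t : Finset ℕ => ⋂ i ∈ t, e i, countable_range _, ?_, le_antisymm ?_ ?_⟩
  · rintro _ ⟨t₁, rfl⟩ _ ⟨t₂, rfl⟩ -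
    exact ⟨t₁ ∪ t₂, Finset.set_biInter_inter t₁ t₂ e⟩
  · conv_lhs => rw [← MeasurableSpace.generateFrom_natGeneratingSequence α]
    exact MeasurableSpace.generateFrom_mono
      (range_subset_iff.2 fun n => ⟨{n}, Finset.set_biInter_singleton n e⟩)
  · exact MeasurableSpace.generateFrom_le (forall_mem_range.2 fun t =>
      .biInter t.countable_toSet fun i _ => MeasurableSpace.measurableSet_natGeneratingSequence i)

theorem ae_eq_of_forall_ae_apply_eq {α β : Type*} [MeasurableSpace α] [MeasurableSpace β]
    [MeasurableSpace.CountablyGenerated β] {μ : Measure α} {κ η : α → Measure β}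
    [∀ a, IsFiniteMeasure (κ a)] (h : ∀ s, MeasurableSet s → ∀ᵐ a ∂μ, κ a s = η a s) :
    ∀ᵐ a ∂μ, κ a = η a := by
  obtain ⟨C, hCc, hCpi, hCgen⟩ := exists_countable_isPiSystem_generateFrom β
  have hC : ∀ᵐ a ∂μ, ∀ s ∈ C, κ a s = η a s :=
    (ae_ball_iff hCc).mpr fun s hs => h s (hCgen ▸ MeasurableSpace.measurableSet_generateFrom hs)
  filter_upwards [hC, h univ MeasurableSet.univ] with a ha huniv
  exact ext_of_generate_finite C hCgen hCpi ha huniv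

theorem ae_eq_of_forall_setLIntegral_eq_measure_inter {α : Type*} {m : MeasurableSpace α}
    [m₀ : MeasurableSpace α] [MeasurableSpace.CountablyGenerated α] (hm : m ≤ m₀)
    {μ : Measure α} [IsFiniteMeasure μ] {κ η : α → Measure α} [∀ a, IsFiniteMeasure (κ a)]
    (hκ : ∀ A, MeasurableSet A → Measurable[m] fun a => κ a A)
    (hη : ∀ A, MeasurableSet A → Measurable[m] fun a => η a A)
    (hκμ : ∀ A B, MeasurableSet A → MeasurableSet[m] B → ∫⁻ a in B, κ a A ∂μ = μ (A ∩ B))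
    (hημ : ∀ A B, MeasurableSet A → MeasurableSet[m] B → ∫⁻ a in B, η a A ∂μ = μ (A ∩ B)) :
    ∀ᵐ a ∂μ, κ a = η a := by
  refine ae_eq_of_forall_ae_apply_eq fun A hA => ?_
  have hind : ∀ B, MeasurableSet[m] B → μ (A ∩ B) = ∫⁻ a in B, A.indicator 1 a ∂μ :=
    fun B _ => by rw [lintegral_indicator_one hA, Measure.restrict_apply hA]
  filter_upwards [ae_eq_condLExp hm μ _ (hκ A hA) fun B hB => (hκμ A B hA hB).trans (hind B hB),
    ae_eq_condLExp hm μ _ (hη A hA) fun B hB => (hημ A B hA hB).trans (hind B hB)]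
    with a hκa hηa
  exact hκa.trans hηa.symm

end MeasureTheory

namespace NLSP

def nonSeparatingSig {α : Type*} (x y : α) : MeasurableSpace α where
  MeasurableSet' B := x ∈ B ↔ y ∈ B
  measurableSet_empty := Iff.rfl
  measurableSet_compl _ hB := not_congr hB
  measurableSet_iUnion _ hB := by
    simp only [mem_iUnion]
    exact exists_congr hB

section Galmarino

variable {F : Type*} [TopologicalSpace F] {ω ω' : C(ℝ≥0, F)}

theorem mem_iff_mem_of_measurableSet_canonicalSig {t : ℝ≥0} {B : Set C(ℝ≥0, F)}
    (hB : MeasurableSet[canonicalSig F t] B) (h : ∀ s ≤ t, ω' s = ω s) : ω' ∈ B ↔ ω ∈ B := by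
  have hle : canonicalSig F t ≤ nonSeparatingSig ω' ω := iSup₂_le fun s hs => by
    rintro _ ⟨C, -, rfl⟩
    show ω' s ∈ C ↔ ω s ∈ C
    rw [h s hs]
  exact hle B hB

theorem IsStoppingTimeOn.apply_eq_of_forall_le_eq {τ : C(ℝ≥0, F) → ℝ≥0}
    (hτ : IsStoppingTimeOn (canonicalSig F) τ) (h : ∀ s ≤ τ ω, ω' s = ω s) : τ ω' = τ ω := by
  have hle : τ ω' ≤ τ ω :=
    (mem_iff_mem_of_measurableSet_canonicalSig (hτ (τ ω)) h).mpr (le_refl (τ ω))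
  have h' : ∀ s ≤ τ ω', ω s = ω' s := fun s hs => (h s (hs.trans hle)).symm
  exact hle.antisymm
    ((mem_iff_mem_of_measurableSet_canonicalSig (hτ (τ ω')) h').mpr (le_refl (τ ω')))

theorem concat_eq_right {t : ℝ≥0} (h : ∀ s ≤ t, ω' s = ω s) :
    concat t ω ω' = ω' := by
  ext s
  simp only [concat, dif_pos (h t le_rfl), ContinuousMap.coe_mk]
  split_ifs with hs
  exacts [(h s hs).symm, rfl]

variable [MeasurableSpace C(ℝ≥0, F)]

theorem ftau_le (τ : C(ℝ≥0, F) → ℝ≥0) : ftau τ ≤ ‹MeasurableSpace C(ℝ≥0, F)› :=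
  MeasurableSpace.generateFrom_le fun _ hA => hA.1

variable {τ : C(ℝ≥0, F) → ℝ≥0}

theorem mem_iff_mem_of_measurableSet_ftau (hτ : IsStoppingTimeOn (canonicalSig F) τ)
    {A : Set C(ℝ≥0, F)} (hA : MeasurableSet[ftau τ] A) (h : ∀ s ≤ τ ω, ω' s = ω s) :
    ω' ∈ A ↔ ω ∈ A := by
  have hle : ftau τ ≤ nonSeparatingSig ω' ω := MeasurableSpace.generateFrom_le fun B hB => by
    have hBτ := mem_iff_mem_of_measurableSet_canonicalSig (hB.2 (τ ω)) h
    show ω' ∈ B ↔ ω ∈ B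
    simpa [hτ.apply_eq_of_forall_le_eq h] using hBτ
  exact hle A hA

theorem apply_eq_of_measurable_ftau (hτ : IsStoppingTimeOn (canonicalSig F) τ) {β : Type*}
    [MeasurableSpace β] [MeasurableSingletonClass β] {f : C(ℝ≥0, F) → β}
    (hf : Measurable[ftau τ] f) (h : ∀ s ≤ τ ω, ω' s = ω s) : f ω' = f ω :=
  (mem_iff_mem_of_measurableSet_ftau hτ (hf (measurableSet_singleton (f ω))) h).mpr rfl

end Galmarino

section Pasting

variable {F : Type*} [TopologicalSpace F] [MeasurableSpace C(ℝ≥0, F)]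
  {P : Measure C(ℝ≥0, F)} {τ : C(ℝ≥0, F) → ℝ≥0} {Q : C(ℝ≥0, F) → Measure C(ℝ≥0, F)}

theorem ae_forall_le_eq_of_measure_eq_one [T2Space F] [OpensMeasurableSpace C(ℝ≥0, F)]
    {μ : Measure C(ℝ≥0, F)} [IsProbabilityMeasure μ] {t : ℝ≥0} {ω : C(ℝ≥0, F)}
    (h : μ {ω' | ∀ s ≤ t, ω' s = ω s} = 1) : ∀ᵐ ω' ∂μ, ∀ s ≤ t, ω' s = ω s := by
  have hclosed : IsClosed {ω' : C(ℝ≥0, F) | ∀ s ≤ t, ω' s = ω s} := by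
    simp only [ofPred_forall]
    exact isClosed_iInter fun s => isClosed_iInter fun _ =>
      isClosed_eq (continuous_eval_const s) continuous_const
  exact (prob_compl_eq_zero_iff hclosed.measurableSet).mpr h

variable (hQ : ∀ᵐ ω ∂P, ∀ᵐ ω' ∂(Q ω), ∀ s ≤ τ ω, ω' s = ω s)
include hQ

theorem pasting_eq_bind : pasting P τ Q = P.bind Q := by
  refine Measure.bind_congr_right ?_
  filter_upwards [hQ] with ω hω
  rw [Measure.map_congr (hω.mono fun ω' => concat_eq_right), Measure.map_id']

theorem ae_ae_eq_of_measurable_ftau (hτ : IsStoppingTimeOn (canonicalSig F) τ) {β : Type*}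
    [MeasurableSpace β] [MeasurableSingletonClass β] {f : C(ℝ≥0, F) → β}
    (hf : Measurable[ftau τ] f) : ∀ᵐ ω ∂P, ∀ᵐ ω' ∂(Q ω), f ω' = f ω := by
  filter_upwards [hQ] with ω hω
  exact hω.mono fun ω' => apply_eq_of_measurable_ftau hτ hf

variable (hτ : IsStoppingTimeOn (canonicalSig F) τ) (hQprob : ∀ ω, IsProbabilityMeasure (Q ω))
  (hQm : Measurable Q)
include hτ hQprob hQm

theorem lintegral_pasting_of_measurable_ftau {f : C(ℝ≥0, F) → ℝ≥0∞}
    (hf : Measurable[ftau τ] f) : ∫⁻ ω, f ω ∂(pasting P τ Q) = ∫⁻ ω, f ω ∂P := by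
  rw [pasting_eq_bind hQ, Measure.lintegral_bind hQm.aemeasurable
    (hf.mono (ftau_le τ) le_rfl).aemeasurable]
  refine lintegral_congr_ae ?_
  filter_upwards [ae_ae_eq_of_measurable_ftau hQ hτ hf] with ω hω
  rw [lintegral_congr_ae hω, lintegral_const, measure_univ, mul_one]

theorem pasting_apply_of_measurableSet_ftau {A : Set C(ℝ≥0, F)} (hA : MeasurableSet[ftau τ] A) :
    pasting P τ Q A = P A := by
  have hind : Measurable[ftau τ] (A.indicator fun _ => (1 : ℝ≥0∞)) :=
    measurable_const.indicator hA
  simpa only [lintegral_indicator_const (ftau_le τ A hA), one_mul] using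
    lintegral_pasting_of_measurable_ftau hQ hτ hQprob hQm hind

theorem setLIntegral_pasting_eq_measure_inter {A B : Set C(ℝ≥0, F)} (hA : MeasurableSet A)
    (hQA : Measurable[ftau τ] fun ω => Q ω A) (hB : MeasurableSet[ftau τ] B) :
    ∫⁻ ω in B, Q ω A ∂(pasting P τ Q) = pasting P τ Q (A ∩ B) := by
  have hBm := ftau_le τ B hB
  have hind : Measurable[ftau τ] (B.indicator fun ω => Q ω A) := hQA.indicator hB
  have hBω : ∀ᵐ ω ∂P, ∀ᵐ ω' ∂(Q ω), (ω' ∈ B) = (ω ∈ B) :=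
    ae_ae_eq_of_measurable_ftau hQ hτ ((@measurableSet_setOfPred _ (ftau τ) (· ∈ B)).mp hB)
  have hQAB : B.indicator (fun ω => Q ω A) =ᵐ[P] fun ω => Q ω (A ∩ B) := by
    filter_upwards [hBω] with ω hω
    by_cases hωB : ω ∈ B
    · rw [indicator_of_mem hωB,
        measure_inter_conull (ae_iff.mp (hω.mono fun _ h => (eq_iff_iff.mp h).mpr hωB))]
    · rw [indicator_of_notMem hωB, measure_mono_null inter_subset_right
        (measure_eq_zero_iff_ae_notMem.mpr (hω.mono fun _ h hx => hωB ((eq_iff_iff.mp h).mp hx)))]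
  rw [← lintegral_indicator hBm, lintegral_pasting_of_measurable_ftau hQ hτ hQprob hQm hind,
    pasting_eq_bind hQ, Measure.bind_apply (hA.inter hBm) hQm.aemeasurable]
  exact lintegral_congr_ae hQAB

end Pasting

/-- **Identities for the pasting measure**: if `Q_ω(X = ω on [0, τ(ω)]) = 1` for `P`-a.e. `ω`
and `P̄ = P ⊗_τ Q`, then (a) `P̄ = P` on `𝓕_τ`, and (b) any regular conditional probability of
`P̄` given `𝓕_τ` coincides `P̄`-a.s. with `Q`. -/
theorem pasting_identities
    {F : Type*} [TopologicalSpace F] [PolishSpace F]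
    [MeasurableSpace C(ℝ≥0, F)] [BorelSpace C(ℝ≥0, F)]
    (P : Measure C(ℝ≥0, F)) [IsProbabilityMeasure P]
    (τ : C(ℝ≥0, F) → ℝ≥0) (hτ : IsStoppingTimeOn (canonicalSig F) τ)
    (Q : C(ℝ≥0, F) → Measure C(ℝ≥0, F))
    (hQprob : ∀ ω, IsProbabilityMeasure (Q ω))
    (hQmeas : ∀ A : Set C(ℝ≥0, F), MeasurableSet A →
      @Measurable _ _ (ftau τ) _ fun ω => Q ω A)
    (hQmatch : ∀ᵐ ω ∂P, Q ω {ω' | ∀ s ≤ τ ω, ω' s = ω s} = 1) :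
    (∀ A : Set C(ℝ≥0, F), MeasurableSet[ftau τ] A → pasting P τ Q A = P A) ∧
      ∀ κ : C(ℝ≥0, F) → Measure C(ℝ≥0, F), IsRCP (pasting P τ Q) τ κ →
        ∀ᵐ ω ∂(pasting P τ Q), κ ω = Q ω := by
  have hQ : ∀ᵐ ω ∂P, ∀ᵐ ω' ∂(Q ω), ∀ s ≤ τ ω, ω' s = ω s :=
    hQmatch.mono fun ω hω => haveI := hQprob ω; ae_forall_le_eq_of_measure_eq_one hω
  have hQm : Measurable Q := Measure.measurable_of_measurable_coe Q fun A hA =>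
    (hQmeas A hA).mono (ftau_le τ) le_rfl
  have hagree := fun A (hA : MeasurableSet[ftau τ] A) =>
    pasting_apply_of_measurableSet_ftau hQ hτ hQprob hQm hA
  refine ⟨hagree, fun κ ⟨hκprob, hκmeas, hκ⟩ => ?_⟩
  have : IsProbabilityMeasure (pasting P τ Q) :=
    ⟨(hagree univ (@MeasurableSet.univ _ (ftau τ))).trans measure_univ⟩
  exact ae_eq_of_forall_setLIntegral_eq_measure_inter (ftau_le τ) hκmeas hQmeas
    (fun A B hA hB => (hκ A B hA hB).symm)
    (fun A B hA hB => setLIntegral_pasting_eq_measure_inter hQ hτ hQprob hQm hA (hQmeas A hA) hB)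

end NLSP
end
end

section
/- Almost-sure continuity of hitting times for a dense set of levels (claim in the proofs of Lemma 'lip const lowe semi' and Proposition 'closedness'): Let L : Ω → C(ℝ₊;ℝ) be continuous and, for M > 0, set ρ_M(ω) := inf{t ≥ 0 : L(ω)(t) ≥ M} ∈ [0,∞] (with inf ∅ = ∞). Then, for every Borel probability measure μ on Ω, there exists a set D ⊆ (0,∞) whose complement in (0,∞) is countable (in particular D is dense in (0,∞)) such that, for every M ∈ D, the map ρ_M is continuous at μ-almost every ω ∈ Ω. -/
/-!
For every level `M`, `ρ_M` is lower semicontinuous, because `{ρ_M > c}` is the open set of paths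
`ω` with `L(ω) < M` on `[0, c]`. It is moreover upper semicontinuous at every `ω` at which
`M ↦ ρ_M(ω)` is right-continuous: a level `M' > M` reached before time `b` is still exceeded
near `ω`. Right-continuity in the level holds almost surely for all but countably many `M`:
`G(M) = ∫ (1 + ρ_M)⁻¹ dμ` is antitone, hence continuous off a countable set, and at a continuity
point monotone convergence forces `(1 + ρ_M)⁻¹ = lim_{M' ↓ M} (1 + ρ_{M'})⁻¹` almost everywhere.
-/

open MeasureTheory Set Filter Topology
open scoped NNReal ENNReal

noncomputable section

namespace NLSP

/-- Hitting time `ρ_M(ω) = inf {t ≥ 0 : L(ω)(t) ≥ M} ∈ [0, ∞]` (with `inf ∅ = ∞`). -/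
def hitTime {F : Type*} [TopologicalSpace F]
    (L : C(ℝ≥0, F) → C(ℝ≥0, ℝ)) (M : ℝ) (ω : C(ℝ≥0, F)) : ℝ≥0∞ :=
  ⨅ t ∈ {t : ℝ≥0 | M ≤ L ω t}, (t : ℝ≥0∞)

lemma _root_.Antitone.iSup_comp_eq_of_continuousAt {α β : Type*} [Preorder α] [TopologicalSpace α]
    [CompleteLinearOrder β] [TopologicalSpace β] [OrderTopology β] {G : α → β} (hG : Antitone G)
    {u : ℕ → α} (hu : Antitone u) {a : α} (hlim : Tendsto u atTop (𝓝 a))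
    (hcont : ContinuousAt G a) : ⨆ n, G (u n) = G a :=
  tendsto_nhds_unique (tendsto_atTop_iSup (hG.comp hu)) (hcont.tendsto.comp hlim)

lemma antitone_add_one_div_nat_succ (M : ℝ) : Antitone fun n : ℕ => M + 1 / ((n : ℝ) + 1) :=
  fun m n h => show M + 1 / ((n : ℝ) + 1) ≤ M + 1 / ((m : ℝ) + 1) by gcongr

lemma tendsto_add_one_div_nat_succ (M : ℝ) :
    Tendsto (fun n : ℕ => M + 1 / ((n : ℝ) + 1)) atTop (𝓝 M) := by
  simpa using (tendsto_const_nhds (x := M)).add tendsto_one_div_add_atTop_nhds_zero_nat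

theorem countable_setOf_not_ae_eq_iInf_add_one_div {Ω : Type*} [MeasurableSpace Ω]
    {μ : Measure Ω} [IsFiniteMeasure μ] {f : ℝ → Ω → ℝ≥0∞} (hf : ∀ ω, Monotone (f · ω))
    (hmeas : ∀ M, Measurable (f M)) :
    {M | ¬ ∀ᵐ ω ∂μ, f M ω = ⨅ n : ℕ, f (M + 1 / ((n : ℝ) + 1)) ω}.Countable := by
  set ψ : ℝ → Ω → ℝ≥0∞ := fun M ω => (1 + f M ω)⁻¹
  have hψ_anti : ∀ ω, Antitone (ψ · ω) := fun ω M M' h =>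
    ENNReal.inv_le_inv.2 (add_le_add le_rfl (hf ω h))
  have hψ_meas : ∀ M, Measurable (ψ M) := fun M => (measurable_const.add (hmeas M)).inv
  have hG : Antitone fun M => ∫⁻ ω, ψ M ω ∂μ := fun M M' h =>
    lintegral_mono fun ω => hψ_anti ω h
  refine hG.countable_not_continuousAt.mono fun M => mt fun hcont => ?_
  set u : ℕ → ℝ := fun n => M + 1 / ((n : ℝ) + 1)
  have hu_ge : ∀ n, M ≤ u n := fun n => le_add_of_nonneg_right (by positivity)
  have hlim : ∫⁻ ω, ⨆ n, ψ (u n) ω ∂μ = ∫⁻ ω, ψ M ω ∂μ := by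
    rw [lintegral_iSup (fun n => hψ_meas (u n))
      fun m n h ω => hψ_anti ω (antitone_add_one_div_nat_succ M h)]
    exact hG.iSup_comp_eq_of_continuousAt (antitone_add_one_div_nat_succ M)
      (tendsto_add_one_div_nat_succ M) hcont
  have hfin : ∫⁻ ω, ⨆ n, ψ (u n) ω ∂μ ≠ ∞ := by
    refine ne_top_of_le_ne_top ?_ (lintegral_mono fun ω => iSup_le fun n =>
      ENNReal.inv_le_one.2 (le_self_add : (1 : ℝ≥0∞) ≤ 1 + f (u n) ω))
    simp
  have hae : (fun ω => ⨆ n, ψ (u n) ω) =ᵐ[μ] ψ M :=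
    ae_eq_of_ae_le_of_lintegral_le (ae_of_all _ fun ω => iSup_le fun n => hψ_anti ω (hu_ge n))
      hfin (hψ_meas M).aemeasurable hlim.ge
  filter_upwards [hae] with ω hω
  rw [← ENNReal.inv_iInf, ← ENNReal.add_iInf, inv_inj,
    ENNReal.add_right_inj ENNReal.one_ne_top] at hω
  exact hω.symm

section HitTime

variable {F : Type*} [TopologicalSpace F] {L : C(ℝ≥0, F) → C(ℝ≥0, ℝ)}

lemma monotone_hitTime (ω : C(ℝ≥0, F)) : Monotone fun M => hitTime L M ω :=
  fun _ _ h => iInf_le_iInf_of_subset fun _ ht => le_trans h ht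

lemma hitTime_le_coe_iff {M : ℝ} {ω : C(ℝ≥0, F)} {c : ℝ≥0} :
    hitTime L M ω ≤ c ↔ ∃ t ∈ Icc (0 : ℝ≥0) c, M ≤ L ω t := by
  set S := {t : ℝ≥0 | M ≤ L ω t}
  constructor
  · intro h
    have hS : S.Nonempty := by
      by_contra hne
      rw [not_nonempty_iff_eq_empty] at hne
      simp [hitTime, S, hne] at h
    have hmem : sInf S ∈ S :=
      (isClosed_le continuous_const (L ω).continuous).csInf_mem hS (OrderBot.bddBelow _)
    have hinf : ((sInf S : ℝ≥0) : ℝ≥0∞) = hitTime L M ω := ENNReal.coe_sInf hS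
    exact ⟨sInf S, ⟨zero_le, by exact_mod_cast hinf.trans_le h⟩, hmem⟩
  · rintro ⟨t, ⟨-, htc⟩, ht⟩
    exact (biInf_le (fun t : ℝ≥0 => (t : ℝ≥0∞)) ht).trans (by exact_mod_cast htc)

lemma lowerSemicontinuous_hitTime (hL : Continuous L) (M : ℝ) :
    LowerSemicontinuous (hitTime L M) := by
  rw [lowerSemicontinuous_iff_isOpen_preimage]
  intro c
  rcases eq_or_ne c ⊤ with rfl | hc
  · simp
  lift c to ℝ≥0 using hc
  have hpre : hitTime L M ⁻¹' Ioi (c : ℝ≥0∞)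
      = L ⁻¹' {g : C(ℝ≥0, ℝ) | MapsTo g (Icc 0 c) (Iio M)} := by
    ext ω
    simp only [mem_preimage, mem_Ioi, ← not_le, hitTime_le_coe_iff, mem_ofPred_eq, MapsTo,
      mem_Iio, not_exists, not_and]
  rw [hpre]
  exact (ContinuousMap.isOpen_setOfPred_mapsTo isCompact_Icc isOpen_Iio).preimage hL

lemma upperSemicontinuousAt_hitTime (hL : Continuous L) {M : ℝ} {ω : C(ℝ≥0, F)}
    (h : hitTime L M ω = ⨅ n : ℕ, hitTime L (M + 1 / ((n : ℝ) + 1)) ω) :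
    UpperSemicontinuousAt (hitTime L M) ω := by
  intro b hb
  rw [h] at hb
  obtain ⟨n, hn⟩ := iInf_lt_iff.1 hb
  obtain ⟨t, ht⟩ := iInf_lt_iff.1 hn
  obtain ⟨hMt, htb⟩ := iInf_lt_iff.1 ht
  have hlt : M < L ω t := (lt_add_of_pos_right M (by positivity)).trans_le hMt
  have hopen : IsOpen {ω' | M < L ω' t} :=
    isOpen_lt continuous_const ((continuous_eval_const t).comp hL)
  filter_upwards [hopen.mem_nhds hlt] with ω' hω'
  exact (biInf_le (fun t : ℝ≥0 => (t : ℝ≥0∞)) hω'.le).trans_lt htb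

lemma continuousAt_hitTime_of_eq_iInf (hL : Continuous L) {M : ℝ} {ω : C(ℝ≥0, F)}
    (h : hitTime L M ω = ⨅ n : ℕ, hitTime L (M + 1 / ((n : ℝ) + 1)) ω) :
    ContinuousAt (hitTime L M) ω :=
  continuousAt_iff_lower_upperSemicontinuousAt.2
    ⟨lowerSemicontinuous_hitTime hL M ω, upperSemicontinuousAt_hitTime hL h⟩

end HitTime

theorem hitTime_ae_continuous_for_dense_levels_general
    {F : Type*} [TopologicalSpace F]
    [MeasurableSpace C(ℝ≥0, F)] [BorelSpace C(ℝ≥0, F)]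
    (L : C(ℝ≥0, F) → C(ℝ≥0, ℝ)) (hL : Continuous L)
    (μ : Measure C(ℝ≥0, F)) [IsProbabilityMeasure μ] :
    ∃ D : Set ℝ, D ⊆ Set.Ioi (0 : ℝ) ∧ (Set.Ioi (0 : ℝ) \ D).Countable ∧
      Set.Ioi (0 : ℝ) ⊆ closure D ∧
      ∀ M ∈ D, ∀ᵐ ω ∂μ, ContinuousAt (hitTime L M) ω := by
  set T := {M | ¬ ∀ᵐ ω ∂μ, hitTime L M ω = ⨅ n : ℕ, hitTime L (M + 1 / ((n : ℝ) + 1)) ω}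
  have hT : T.Countable := countable_setOf_not_ae_eq_iInf_add_one_div monotone_hitTime
    fun M => (lowerSemicontinuous_hitTime hL M).measurable
  refine ⟨Ioi 0 \ T, sdiff_subset, ?_, ?_, fun M hM => ?_⟩
  · rw [sdiff_sdiff_right_self]
    exact hT.mono inter_subset_right
  · rw [sdiff_eq]
    exact (hT.dense_compl ℝ).open_subset_closure_inter isOpen_Ioi
  · filter_upwards [not_not.1 hM.2] with ω hω
    exact continuousAt_hitTime_of_eq_iInf hL hω

/-- **Almost-sure continuity of hitting times for a dense set of levels**: if `L` is continuous
then, for every Borel probability measure `μ` on the path space, there is a set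
`D ⊆ (0, ∞)` with countable complement in `(0, ∞)` (in particular dense in `(0, ∞)`) such
that, for every `M ∈ D`, the hitting time `ρ_M` is continuous at `μ`-almost every path. -/
theorem hitTime_ae_continuous_for_dense_levels
    {F : Type*} [TopologicalSpace F] [PolishSpace F]
    [MeasurableSpace C(ℝ≥0, F)] [BorelSpace C(ℝ≥0, F)]
    (L : C(ℝ≥0, F) → C(ℝ≥0, ℝ)) (hL : Continuous L)
    (μ : Measure C(ℝ≥0, F)) [IsProbabilityMeasure μ] :
    ∃ D : Set ℝ, D ⊆ Set.Ioi (0 : ℝ) ∧ (Set.Ioi (0 : ℝ) \ D).Countable ∧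
      Set.Ioi (0 : ℝ) ⊆ closure D ∧
      ∀ M ∈ D, ∀ᵐ ω ∂μ, ContinuousAt (hitTime L M) ω :=
  hitTime_ae_continuous_for_dense_levels_general L hL μ

end NLSP
end
end
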